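/- arXiv:1407.1757 — 7 statements merged into one kernel-verified Lean document; each statement's English description precedes it below -/
import Mathlib

section
/- Let I be a nonempty finite index set, (λ_α) positive reals, (Λ_{α,β})_{α,β∈I} nonnegative, (Λ_{α,ph})_{α∈I} nonnegative with Σ_{β∈I} Λ_{α,β} + Λ_{α,ph} = λ_α for all α, and 0 < ε_α ≤ 1, σ > 0, θ_ext > 0, u_α ≥ 0. If (R_α)_{α∈I} satisfies R_α λ_α − (1−ε_α) Σ_β R_β Λ_{α,β} = σ ε_α u_α⁴ λ_α + σ (1−ε_α) θ_ext⁴ Λ_{α,ph} for all α, then σ·min{(min_α u_α)⁴, θ_ext⁴} ≤ R_α ≤ σ·max{(max_α u_α)⁴, θ_ext⁴} for all α. -/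
theorem stmt_3 {I : Type*} [Fintype I] [Nonempty I]
    (lam : I → ℝ) (hlam : ∀ α, 0 < lam α)
    (Λ : I → I → ℝ) (hΛ : ∀ α β, 0 ≤ Λ α β)
    (Λph : I → ℝ) (hΛph : ∀ α, 0 ≤ Λph α)
    (hrow : ∀ α, (∑ β, Λ α β) + Λph α = lam α)
    (ε : I → ℝ) (hε : ∀ α, 0 < ε α ∧ ε α ≤ 1)
    (σ : ℝ) (hσ : 0 < σ)
    (θext : ℝ) (hθ : 0 < θext)
    (u : I → ℝ) (hu : ∀ α, 0 ≤ u α)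
    (R : I → ℝ)
    (hR : ∀ α, R α * lam α - (1 - ε α) * ∑ β, R β * Λ α β
      = σ * ε α * u α ^ 4 * lam α + σ * (1 - ε α) * θext ^ 4 * Λph α) :
    ∀ α, σ * min ((Finset.univ.inf' Finset.univ_nonempty u) ^ 4) (θext ^ 4) ≤ R α
      ∧ R α ≤ σ * max ((Finset.univ.sup' Finset.univ_nonempty u) ^ 4) (θext ^ 4) := by
  obtain ⟨α₀, -, hmin⟩ := Finset.exists_min_image Finset.univ R Finset.univ_nonempty
  obtain ⟨α₁, -, hmax⟩ := Finset.exists_max_image Finset.univ R Finset.univ_nonempty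
  set m := σ * min ((Finset.univ.inf' Finset.univ_nonempty u) ^ 4) (θext ^ 4) with hm
  set M := σ * max ((Finset.univ.sup' Finset.univ_nonempty u) ^ 4) (θext ^ 4) with hM
  have hinf0 : 0 ≤ Finset.univ.inf' Finset.univ_nonempty u :=
    Finset.le_inf' _ _ fun β _ => hu β
  have hmu : ∀ α, m ≤ σ * u α ^ 4 := fun α => by
    have h1 : Finset.univ.inf' Finset.univ_nonempty u ≤ u α :=
      Finset.inf'_le u (Finset.mem_univ α)
    have h2 := pow_le_pow_left₀ hinf0 h1 4
    have h3 := min_le_left ((Finset.univ.inf' Finset.univ_nonempty u) ^ 4) (θext ^ 4)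
    nlinarith
  have hmθ : m ≤ σ * θext ^ 4 := by
    have h3 := min_le_right ((Finset.univ.inf' Finset.univ_nonempty u) ^ 4) (θext ^ 4)
    nlinarith
  have hMu : ∀ α, σ * u α ^ 4 ≤ M := fun α => by
    have h1 : u α ≤ Finset.univ.sup' Finset.univ_nonempty u :=
      Finset.le_sup' u (Finset.mem_univ α)
    have h2 := pow_le_pow_left₀ (hu α) h1 4
    have h3 := le_max_left ((Finset.univ.sup' Finset.univ_nonempty u) ^ 4) (θext ^ 4)
    nlinarith
  have hMθ : σ * θext ^ 4 ≤ M := by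
    have h3 := le_max_right ((Finset.univ.sup' Finset.univ_nonempty u) ^ 4) (θext ^ 4)
    nlinarith
  -- lower bound at the minimizer
  have keyL : m ≤ R α₀ := by
    obtain ⟨hε0, hε1⟩ := hε α₀
    have heq := hR α₀
    have hS0 : (0:ℝ) ≤ ∑ β, Λ α₀ β := Finset.sum_nonneg fun β _ => hΛ α₀ β
    have hsum : R α₀ * ∑ β, Λ α₀ β ≤ ∑ β, R β * Λ α₀ β := by
      rw [Finset.mul_sum]
      exact Finset.sum_le_sum fun β _ =>
        mul_le_mul_of_nonneg_right (hmin β (Finset.mem_univ β)) (hΛ α₀ β)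
    have hrow0 := hrow α₀
    have hph : Λph α₀ = lam α₀ - ∑ β, Λ α₀ β := by linarith
    have hph0 := hΛph α₀
    rw [hph] at heq hph0
    have hSle : (∑ β, Λ α₀ β) ≤ lam α₀ := by linarith
    have hDpos : 0 < lam α₀ - (1 - ε α₀) * ∑ β, Λ α₀ β := by
      nlinarith [hlam α₀, mul_pos hε0 (hlam α₀)]
    have h1 : m * (ε α₀ * lam α₀) ≤ σ * u α₀ ^ 4 * (ε α₀ * lam α₀) :=
      mul_le_mul_of_nonneg_right (hmu α₀) (mul_pos hε0 (hlam α₀)).le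
    have h2 : m * ((1 - ε α₀) * (lam α₀ - ∑ β, Λ α₀ β))
        ≤ σ * θext ^ 4 * ((1 - ε α₀) * (lam α₀ - ∑ β, Λ α₀ β)) :=
      mul_le_mul_of_nonneg_right hmθ (mul_nonneg (by linarith) hph0)
    have hsum' := mul_le_mul_of_nonneg_right hsum (by linarith : (0:ℝ) ≤ 1 - ε α₀)
    have hA : m * (lam α₀ - (1 - ε α₀) * ∑ β, Λ α₀ β)
        ≤ R α₀ * (lam α₀ - (1 - ε α₀) * ∑ β, Λ α₀ β) := by nlinarith [heq, h1, h2, hsum']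
    nlinarith [hA, hDpos]
  -- upper bound at the maximizer
  have keyU : R α₁ ≤ M := by
    obtain ⟨hε0, hε1⟩ := hε α₁
    have heq := hR α₁
    have hS0 : (0:ℝ) ≤ ∑ β, Λ α₁ β := Finset.sum_nonneg fun β _ => hΛ α₁ β
    have hsum : (∑ β, R β * Λ α₁ β) ≤ R α₁ * ∑ β, Λ α₁ β := by
      rw [Finset.mul_sum]
      exact Finset.sum_le_sum fun β _ =>
        mul_le_mul_of_nonneg_right (hmax β (Finset.mem_univ β)) (hΛ α₁ β)
    have hrow1 := hrow α₁
    have hph : Λph α₁ = lam α₁ - ∑ β, Λ α₁ β := by linarith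
    have hph0 := hΛph α₁
    rw [hph] at heq hph0
    have hSle : (∑ β, Λ α₁ β) ≤ lam α₁ := by linarith
    have hDpos : 0 < lam α₁ - (1 - ε α₁) * ∑ β, Λ α₁ β := by
      nlinarith [hlam α₁, mul_pos hε0 (hlam α₁)]
    have h1 : σ * u α₁ ^ 4 * (ε α₁ * lam α₁) ≤ M * (ε α₁ * lam α₁) :=
      mul_le_mul_of_nonneg_right (hMu α₁) (mul_pos hε0 (hlam α₁)).le
    have h2 : σ * θext ^ 4 * ((1 - ε α₁) * (lam α₁ - ∑ β, Λ α₁ β))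
        ≤ M * ((1 - ε α₁) * (lam α₁ - ∑ β, Λ α₁ β)) :=
      mul_le_mul_of_nonneg_right hMθ (mul_nonneg (by linarith) hph0)
    have hsum' := mul_le_mul_of_nonneg_right hsum (by linarith : (0:ℝ) ≤ 1 - ε α₁)
    have hA : R α₁ * (lam α₁ - (1 - ε α₁) * ∑ β, Λ α₁ β)
        ≤ M * (lam α₁ - (1 - ε α₁) * ∑ β, Λ α₁ β) := by nlinarith [heq, h1, h2, hsum']
    nlinarith [hA, hDpos]
  intro α
  exact ⟨le_trans keyL (hmin α (Finset.mem_univ α)),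
    le_trans (hmax α (Finset.mem_univ α)) keyU⟩
end

section
/- Let I be a nonempty finite index set, r > 0, L ≥ 0, ε_min > 0. Let ε : ℝ → (0,1] be L-Lipschitz on [0,r] with ε(θ) ≥ ε_min for θ ∈ [0,r]. Let (λ_α) be positive, (Λ_{α,β}) nonnegative with Σ_β Λ_{α,β} = λ_α, σ > 0. For each u ∈ [0,r]^I let R(u) ∈ ℝ^I be the unique solution of R_α(u) λ_α − (1−ε(u_α)) Σ_β R_β(u) Λ_{α,β} = σ ε(u_α) u_α⁴ λ_α. Then R is Lipschitz on [0,r]^I with respect to the max-norm with Lipschitz constant σ ε_min⁻¹ (4r³ + 2 L r⁴). -/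
lemma pow4_lip_aux {u v r : ℝ} (hu0 : 0 ≤ u) (hur : u ≤ r) (hv0 : 0 ≤ v) (hvr : v ≤ r) :
    |u^4 - v^4| ≤ 4 * r^3 * |u - v| := by
  have h : u^4 - v^4 = (u - v) * (u^3 + u^2*v + u*v^2 + v^3) := by ring
  rw [h, abs_mul, mul_comm (|u - v|)]
  apply mul_le_mul_of_nonneg_right _ (abs_nonneg _)
  rw [abs_of_nonneg (by positivity)]
  nlinarith [pow_le_pow_left₀ hu0 hur 3, pow_le_pow_left₀ hv0 hvr 3,
    mul_le_mul (pow_le_pow_left₀ hu0 hur 2) hvr hv0 (by positivity),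
    mul_le_mul (pow_le_pow_left₀ hv0 hvr 2) hur hu0 (by positivity),
    sq_nonneg u, sq_nonneg v]

theorem stmt_6 {I : Type*} [Fintype I] [Nonempty I]
    (r L εmin σ : ℝ) (hr : 0 < r) (hL : 0 ≤ L) (hεmin : 0 < εmin) (hσ : 0 < σ)
    (ε : ℝ → ℝ)
    (hrange : ∀ θ ∈ Set.Icc (0:ℝ) r, 0 < ε θ ∧ ε θ ≤ 1)
    (hεlow : ∀ θ ∈ Set.Icc (0:ℝ) r, εmin ≤ ε θ)
    (hlip : ∀ θ₁ ∈ Set.Icc (0:ℝ) r, ∀ θ₂ ∈ Set.Icc (0:ℝ) r,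
      |ε θ₁ - ε θ₂| ≤ L * |θ₁ - θ₂|)
    (lam : I → ℝ) (hlam : ∀ α, 0 < lam α)
    (Λ : I → I → ℝ) (hΛ : ∀ α β, 0 ≤ Λ α β)
    (hrow : ∀ α, ∑ β, Λ α β = lam α)
    (R : (I → ℝ) → (I → ℝ))
    (hR : ∀ u : I → ℝ, (∀ i, u i ∈ Set.Icc (0:ℝ) r) → ∀ α,
      R u α * lam α - (1 - ε (u α)) * ∑ β, R u β * Λ α β
        = σ * ε (u α) * u α ^ 4 * lam α) :
    ∀ u v : I → ℝ, (∀ i, u i ∈ Set.Icc (0:ℝ) r) → (∀ i, v i ∈ Set.Icc (0:ℝ) r) →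
      ∀ α, |R u α - R v α|
        ≤ σ * εmin⁻¹ * (4 * r ^ 3 + 2 * L * r ^ 4)
          * Finset.univ.sup' Finset.univ_nonempty (fun i => |u i - v i|) := by
  -- A priori bounds: 0 ≤ R v β ≤ σ r⁴
  have key : ∀ v : I → ℝ, (∀ i, v i ∈ Set.Icc (0:ℝ) r) →
      ∀ β, 0 ≤ R v β ∧ R v β ≤ σ * r ^ 4 := by
    intro v hv
    -- upper bound at the max
    obtain ⟨β₀, -, hβ₀⟩ := Finset.exists_mem_eq_sup' Finset.univ_nonempty (R v)
    obtain ⟨β₁, -, hβ₁⟩ := Finset.exists_mem_eq_inf' Finset.univ_nonempty (R v)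
    have hεpos := (hrange _ (hv β₀)).1
    have hεle := (hrange _ (hv β₀)).2
    have hεpos1 := (hrange _ (hv β₁)).1
    have hεle1 := (hrange _ (hv β₁)).2
    have hsum_up : ∑ β, R v β * Λ β₀ β ≤ R v β₀ * lam β₀ := by
      rw [← hrow β₀, Finset.mul_sum]
      refine Finset.sum_le_sum fun β _ => ?_
      have : R v β ≤ R v β₀ := hβ₀ ▸ Finset.le_sup' (R v) (Finset.mem_univ β)
      exact mul_le_mul_of_nonneg_right this (hΛ _ _)
    have hsum_lo : R v β₁ * lam β₁ ≤ ∑ β, R v β * Λ β₁ β := by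
      rw [← hrow β₁, Finset.mul_sum]
      refine Finset.sum_le_sum fun β _ => ?_
      have : R v β₁ ≤ R v β := hβ₁ ▸ Finset.inf'_le (R v) (Finset.mem_univ β)
      exact mul_le_mul_of_nonneg_right this (hΛ _ _)
    have e0 := hR v hv β₀
    have e1 := hR v hv β₁
    have hv4r : v β₀ ^ 4 ≤ r ^ 4 := pow_le_pow_left₀ (hv β₀).1 (hv β₀).2 4
    have hv40 : 0 ≤ v β₁ ^ 4 := by positivity
    have hlam0 := hlam β₀
    have hlam1 := hlam β₁
    -- R v β₀ ≤ σ r⁴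
    have hub : R v β₀ ≤ σ * r ^ 4 := by
      have h1 : ε (v β₀) * (R v β₀ * lam β₀) ≤ σ * ε (v β₀) * (r ^ 4) * lam β₀ := by
        nlinarith [mul_nonneg (by linarith : (0:ℝ) ≤ 1 - ε (v β₀))
            (by linarith : (0:ℝ) ≤ R v β₀ * lam β₀ - ∑ β, R v β * Λ β₀ β),
          mul_nonneg (mul_nonneg (mul_nonneg hσ.le hεpos.le) hlam0.le)
            (by linarith : (0:ℝ) ≤ r ^ 4 - v β₀ ^ 4)]
      nlinarith [mul_pos hεpos hlam0]
    have hlb : 0 ≤ R v β₁ := by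
      have h1 : σ * ε (v β₁) * v β₁ ^ 4 * lam β₁ ≤ ε (v β₁) * (R v β₁ * lam β₁) := by
        nlinarith [mul_nonneg (by linarith : (0:ℝ) ≤ 1 - ε (v β₁))
            (by linarith : (0:ℝ) ≤ (∑ β, R v β * Λ β₁ β) - R v β₁ * lam β₁)]
      have h2 : 0 ≤ σ * ε (v β₁) * v β₁ ^ 4 * lam β₁ := by positivity
      nlinarith [mul_pos hεpos1 hlam1]
    intro β
    constructor
    · exact le_trans hlb (hβ₁ ▸ Finset.inf'_le (R v) (Finset.mem_univ β))
    · exact le_trans (hβ₀ ▸ Finset.le_sup' (R v) (Finset.mem_univ β)) hub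
  intro u v hu hv α
  set D := Finset.univ.sup' Finset.univ_nonempty (fun i => |u i - v i|) with hD
  have hD0 : 0 ≤ D := le_trans (abs_nonneg _)
    (hD.symm ▸ Finset.le_sup' (fun i => |u i - v i|) (Finset.mem_univ (Classical.arbitrary I)))
  obtain ⟨α₀, -, hα₀⟩ := Finset.exists_mem_eq_sup' Finset.univ_nonempty
    (fun i => |R u i - R v i|)
  set M := Finset.univ.sup' Finset.univ_nonempty (fun i => |R u i - R v i|) with hM
  have hM0 : 0 ≤ M := hα₀ ▸ abs_nonneg _
  have hMle : |R u α - R v α| ≤ M := hM.symm ▸ Finset.le_sup' (fun i => |R u i - R v i|) (Finset.mem_univ α)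
  have hmain : M ≤ σ * εmin⁻¹ * (4 * r ^ 3 + 2 * L * r ^ 4) * D := by
    have e1 := hR u hu α₀
    have e2 := hR v hv α₀
    have hεu := hrange _ (hu α₀)
    have hεv := hrange _ (hv α₀)
    have hεum := hεlow _ (hu α₀)
    have hlam0 := hlam α₀
    have heq : (R u α₀ - R v α₀) * lam α₀
        = (1 - ε (u α₀)) * (∑ β, (R u β - R v β) * Λ α₀ β)
          + (ε (v α₀) - ε (u α₀)) * (∑ β, R v β * Λ α₀ β)
          + σ * (ε (u α₀) * u α₀ ^ 4 - ε (v α₀) * v α₀ ^ 4) * lam α₀ := by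
      have hsub : ∑ β, (R u β - R v β) * Λ α₀ β
          = (∑ β, R u β * Λ α₀ β) - ∑ β, R v β * Λ α₀ β := by
        rw [← Finset.sum_sub_distrib]
        exact Finset.sum_congr rfl fun _ _ => by ring
      rw [hsub]; linear_combination e1 - e2
    -- bound |Σ w Λ| ≤ M λ
    have hS1 : |∑ β, (R u β - R v β) * Λ α₀ β| ≤ M * lam α₀ := by
      calc |∑ β, (R u β - R v β) * Λ α₀ β| ≤ ∑ β, |(R u β - R v β) * Λ α₀ β| :=
            Finset.abs_sum_le_sum_abs _ _
        _ ≤ ∑ β, M * Λ α₀ β := by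
            refine Finset.sum_le_sum fun β _ => ?_
            rw [abs_mul, abs_of_nonneg (hΛ _ _)]
            exact mul_le_mul_of_nonneg_right
              (hM.symm ▸ Finset.le_sup' (fun i => |R u i - R v i|) (Finset.mem_univ β)) (hΛ _ _)
        _ = M * lam α₀ := by rw [← Finset.mul_sum, hrow]
    -- bounds on Σ R v Λ
    have hS2a : 0 ≤ ∑ β, R v β * Λ α₀ β :=
      Finset.sum_nonneg fun β _ => mul_nonneg (key v hv β).1 (hΛ _ _)
    have hS2b : ∑ β, R v β * Λ α₀ β ≤ σ * r ^ 4 * lam α₀ := by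
      calc ∑ β, R v β * Λ α₀ β ≤ ∑ β, σ * r ^ 4 * Λ α₀ β :=
            Finset.sum_le_sum fun β _ =>
              mul_le_mul_of_nonneg_right (key v hv β).2 (hΛ _ _)
        _ = σ * r ^ 4 * lam α₀ := by rw [← Finset.mul_sum, hrow]
    have huvD : |u α₀ - v α₀| ≤ D :=
      hD.symm ▸ Finset.le_sup' (fun i => |u i - v i|) (Finset.mem_univ α₀)
    have hεlip : |ε (u α₀) - ε (v α₀)| ≤ L * D := by
      calc |ε (u α₀) - ε (v α₀)| ≤ L * |u α₀ - v α₀| := hlip _ (hu α₀) _ (hv α₀)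
        _ ≤ L * D := mul_le_mul_of_nonneg_left huvD hL
    have hpow : |u α₀ ^ 4 - v α₀ ^ 4| ≤ 4 * r ^ 3 * D := by
      calc |u α₀ ^ 4 - v α₀ ^ 4| ≤ 4 * r ^ 3 * |u α₀ - v α₀| :=
            pow4_lip_aux (hu α₀).1 (hu α₀).2 (hv α₀).1 (hv α₀).2
        _ ≤ 4 * r ^ 3 * D := by
            exact mul_le_mul_of_nonneg_left huvD (by positivity)
    have hv4r : v α₀ ^ 4 ≤ r ^ 4 := pow_le_pow_left₀ (hv α₀).1 (hv α₀).2 4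
    have hv40 : 0 ≤ v α₀ ^ 4 := by positivity
    have hprod : |ε (u α₀) * u α₀ ^ 4 - ε (v α₀) * v α₀ ^ 4|
        ≤ 4 * r ^ 3 * D + L * r ^ 4 * D := by
      have hsplit : ε (u α₀) * u α₀ ^ 4 - ε (v α₀) * v α₀ ^ 4
          = ε (u α₀) * (u α₀ ^ 4 - v α₀ ^ 4) + (ε (u α₀) - ε (v α₀)) * v α₀ ^ 4 := by
        ring
      rw [hsplit]
      calc |ε (u α₀) * (u α₀ ^ 4 - v α₀ ^ 4) + (ε (u α₀) - ε (v α₀)) * v α₀ ^ 4|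
          ≤ |ε (u α₀) * (u α₀ ^ 4 - v α₀ ^ 4)| + |(ε (u α₀) - ε (v α₀)) * v α₀ ^ 4| :=
            abs_add_le _ _
        _ = ε (u α₀) * |u α₀ ^ 4 - v α₀ ^ 4| + |ε (u α₀) - ε (v α₀)| * v α₀ ^ 4 := by
            rw [abs_mul, abs_mul, abs_of_pos hεu.1, abs_of_nonneg hv40]
        _ ≤ 1 * (4 * r ^ 3 * D) + (L * D) * r ^ 4 :=
            add_le_add (mul_le_mul hεu.2 hpow (abs_nonneg _) one_pos.le)
              (mul_le_mul hεlip hv4r hv40 (mul_nonneg hL hD0))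
        _ = 4 * r ^ 3 * D + L * r ^ 4 * D := by ring
    -- combine
    have hMeq : M = |R u α₀ - R v α₀| := hα₀
    have hgoal1 : ε (u α₀) * M * lam α₀ ≤ σ * (4 * r ^ 3 + 2 * L * r ^ 4) * D * lam α₀ := by
      have habs : |R u α₀ - R v α₀| * lam α₀
          ≤ (1 - ε (u α₀)) * (M * lam α₀)
            + (L * D) * (σ * r ^ 4 * lam α₀)
            + σ * (4 * r ^ 3 * D + L * r ^ 4 * D) * lam α₀ := by
        have h0 : |(R u α₀ - R v α₀) * lam α₀| = |R u α₀ - R v α₀| * lam α₀ := by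
          rw [abs_mul, abs_of_pos hlam0]
        rw [← h0, heq]
        calc |(1 - ε (u α₀)) * (∑ β, (R u β - R v β) * Λ α₀ β)
              + (ε (v α₀) - ε (u α₀)) * (∑ β, R v β * Λ α₀ β)
              + σ * (ε (u α₀) * u α₀ ^ 4 - ε (v α₀) * v α₀ ^ 4) * lam α₀|
            ≤ |(1 - ε (u α₀)) * (∑ β, (R u β - R v β) * Λ α₀ β)|
              + |(ε (v α₀) - ε (u α₀)) * (∑ β, R v β * Λ α₀ β)|
              + |σ * (ε (u α₀) * u α₀ ^ 4 - ε (v α₀) * v α₀ ^ 4) * lam α₀| :=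
              abs_add_three _ _ _
          _ ≤ (1 - ε (u α₀)) * (M * lam α₀) + (L * D) * (σ * r ^ 4 * lam α₀)
              + σ * (4 * r ^ 3 * D + L * r ^ 4 * D) * lam α₀ := by
              gcongr ?_ + ?_ + ?_
              · rw [abs_mul, abs_of_nonneg (by linarith [hεu.2])]
                exact mul_le_mul_of_nonneg_left hS1 (by linarith [hεu.2])
              · rw [abs_mul]
                refine mul_le_mul ?_ ?_ (abs_nonneg _) (by positivity)
                · rw [abs_sub_comm]; exact hεlip
                · rw [abs_of_nonneg hS2a]; exact hS2b
              · rw [abs_mul, abs_mul, abs_of_pos hσ, abs_of_pos hlam0, mul_assoc,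
                  mul_assoc]
                exact mul_le_mul_of_nonneg_left
                  (mul_le_mul_of_nonneg_right hprod hlam0.le) hσ.le
      rw [hMeq] at habs ⊢
      linarith [habs]
    have hεmM : εmin * M ≤ σ * (4 * r ^ 3 + 2 * L * r ^ 4) * D := by
      have h1 : ε (u α₀) * M ≤ σ * (4 * r ^ 3 + 2 * L * r ^ 4) * D :=
        le_of_mul_le_mul_right (by linarith [hgoal1]) hlam0
      nlinarith [hεum, hM0]
    rw [mul_comm σ εmin⁻¹, mul_assoc, mul_assoc, ← mul_assoc σ]
    rw [le_inv_mul_iff₀ hεmin]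
    linarith [hεmM]
  exact le_trans hMle hmain
end

section
/- Let I be a nonempty finite index set and τ ⊆ ℝ an interval. Let H : τ^I → ℝ^I be given componentwise by H_i(u) = b_i(u_i) + h_i(u_i) − b_i(ũ_i) − g_i(u) for continuous functions b_i, h_i : τ → ℝ, g_i : τ^I → ℝ and a fixed ũ ∈ τ^I. Suppose there are m̃, M̃ ∈ τ, nonpositive numbers (β_i), and nonnegative numbers (B_i) such that for all i, u ∈ τ^I, θ ∈ τ: (a) if max{max_j u_j, M̃} ≤ θ then g_i(u) − h_i(θ) ≤ B_i; (b) if θ ≤ min{m̃, min_j u_j} then g_i(u) − h_i(θ) ≥ β_i. Suppose further there are positive constants C_{b,i} with b_i(θ₂) ≥ (θ₂ − θ₁) C_{b,i} + b_i(θ₁) whenever θ₂ ≥ θ₁ in τ. Set β := min_i β_i/C_{b,i}, B := max_i B_i/C_{b,i}, m(ũ) := min{m̃, min_j ũ_j + β}, M(ũ) := max{M̃, max_j ũ_j + B}. Then every u₀ ∈ τ^I with H(u₀) = 0 satisfies u₀ ∈ [m(ũ), M(ũ)]^I. -/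
theorem stmt_9 {I : Type*} [Fintype I] [Nonempty I]
    (τ : Set ℝ) (hτ : τ.OrdConnected)
    (b h : I → ℝ → ℝ) (g : I → (I → ℝ) → ℝ)
    (hb : ∀ i, ContinuousOn (b i) τ) (hh : ∀ i, ContinuousOn (h i) τ)
    (hg : ∀ i, ContinuousOn (g i) {u : I → ℝ | ∀ j, u j ∈ τ})
    (ut : I → ℝ) (hut : ∀ i, ut i ∈ τ)
    (mt Mt : ℝ) (hmt : mt ∈ τ) (hMt : Mt ∈ τ)
    (βv : I → ℝ) (hβ : ∀ i, βv i ≤ 0)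
    (Bv : I → ℝ) (hB : ∀ i, 0 ≤ Bv i)
    (hmax : ∀ i, ∀ u : I → ℝ, (∀ j, u j ∈ τ) → ∀ θ ∈ τ,
      max (Finset.univ.sup' Finset.univ_nonempty u) Mt ≤ θ →
        g i u - h i θ ≤ Bv i)
    (hmin : ∀ i, ∀ u : I → ℝ, (∀ j, u j ∈ τ) → ∀ θ ∈ τ,
      θ ≤ min mt (Finset.univ.inf' Finset.univ_nonempty u) →
        βv i ≤ g i u - h i θ)
    (Cb : I → ℝ) (hCb : ∀ i, 0 < Cb i)
    (hbmono : ∀ i, ∀ θ₁ ∈ τ, ∀ θ₂ ∈ τ, θ₁ ≤ θ₂ →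
      (θ₂ - θ₁) * Cb i + b i θ₁ ≤ b i θ₂)
    (u₀ : I → ℝ) (hu₀ : ∀ i, u₀ i ∈ τ)
    (hroot : ∀ i, b i (u₀ i) + h i (u₀ i) - b i (ut i) - g i u₀ = 0) :
    ∀ i, u₀ i ∈ Set.Icc
      (min mt (Finset.univ.inf' Finset.univ_nonempty ut
        + Finset.univ.inf' Finset.univ_nonempty (fun j => βv j / Cb j)))
      (max Mt (Finset.univ.sup' Finset.univ_nonempty ut
        + Finset.univ.sup' Finset.univ_nonempty (fun j => Bv j / Cb j))) := by
  intro i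
  constructor
  · by_contra hlt
    push_neg at hlt
    obtain ⟨k, -, hk⟩ := Finset.exists_mem_eq_inf' (Finset.univ_nonempty (α := I)) u₀
    have hk_le : u₀ k ≤ u₀ i := hk ▸ Finset.inf'_le _ (Finset.mem_univ i)
    have h1 : u₀ k < mt := lt_of_le_of_lt hk_le (lt_of_lt_of_le hlt (min_le_left _ _))
    have h2 : u₀ k < ut k + βv k / Cb k := by
      calc u₀ k ≤ u₀ i := hk_le
        _ < _ := lt_of_lt_of_le hlt (min_le_right _ _)
        _ ≤ ut k + βv k / Cb k := add_le_add
            (Finset.inf'_le _ (Finset.mem_univ k))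
            (Finset.inf'_le (fun j => βv j / Cb j) (Finset.mem_univ k))
    have hβC : βv k / Cb k ≤ 0 := div_nonpos_of_nonpos_of_nonneg (hβ k) (hCb k).le
    have hle : u₀ k ≤ ut k := (h2.trans_le (by linarith)).le
    have hg1 : βv k ≤ g k u₀ - h k (u₀ k) :=
      hmin k u₀ hu₀ (u₀ k) (hu₀ k) (le_min h1.le (le_of_eq hk.symm))
    have hb1 := hbmono k (u₀ k) (hu₀ k) (ut k) (hut k) hle
    have hrk := hroot k
    have hmul : (u₀ k - ut k) * Cb k < βv k := by
      have := (lt_div_iff₀ (hCb k)).mp (by linarith : u₀ k - ut k < βv k / Cb k)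
      linarith [this]
    linarith
  · by_contra hlt
    push_neg at hlt
    obtain ⟨k, -, hk⟩ := Finset.exists_mem_eq_sup' (Finset.univ_nonempty (α := I)) u₀
    have hk_le : u₀ i ≤ u₀ k := hk ▸ Finset.le_sup' _ (Finset.mem_univ i)
    have h1 : Mt < u₀ k := lt_of_le_of_lt (le_max_left _ _) (hlt.trans_le hk_le)
    have h2 : ut k + Bv k / Cb k < u₀ k := by
      calc ut k + Bv k / Cb k
          ≤ _ + _ := add_le_add
            (Finset.le_sup' _ (Finset.mem_univ k))
            (Finset.le_sup' (fun j => Bv j / Cb j) (Finset.mem_univ k))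
        _ ≤ max Mt _ := le_max_right _ _
        _ < u₀ i := hlt
        _ ≤ u₀ k := hk_le
    have hBC : 0 ≤ Bv k / Cb k := div_nonneg (hB k) (hCb k).le
    have hle : ut k ≤ u₀ k := (lt_of_le_of_lt (by linarith) h2).le
    have hg1 : g k u₀ - h k (u₀ k) ≤ Bv k :=
      hmax k u₀ hu₀ (u₀ k) (hu₀ k) (max_le (le_of_eq hk) h1.le)
    have hb1 := hbmono k (ut k) (hut k) (u₀ k) (hu₀ k) hle
    have hrk := hroot k
    have hmul : Bv k < (u₀ k - ut k) * Cb k := by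
      have := (div_lt_iff₀ (hCb k)).mp (by linarith : Bv k / Cb k < u₀ k - ut k)
      linarith [this]
    linarith
end

section
/- Let I be a nonempty finite index set, (λ_α) positive reals, (Λ_{α,β}) nonnegative with Σ_β Λ_{α,β} = λ_α, 0 < ε_α ≤ 1 for all α, σ > 0, and u ∈ (ℝ≥0)^I. Let R ∈ ℝ^I solve R_α λ_α − (1−ε_α) Σ_β R_β Λ_{α,β} = σ ε_α u_α⁴ λ_α for all α, and define V_α := ε_α Σ_β R_β Λ_{α,β}. Then σ ε_α (min_j u_j)⁴ λ_α ≤ V_α ≤ σ ε_α (max_j u_j)⁴ λ_α for each α ∈ I. -/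
theorem stmt_13 {I : Type*} [Fintype I] [Nonempty I]
    (lam : I → ℝ) (hlam : ∀ α, 0 < lam α)
    (Λ : I → I → ℝ) (hΛ : ∀ α β, 0 ≤ Λ α β)
    (hrow : ∀ α, ∑ β, Λ α β = lam α)
    (ε : I → ℝ) (hε : ∀ α, 0 < ε α ∧ ε α ≤ 1)
    (σ : ℝ) (hσ : 0 < σ)
    (u : I → ℝ) (hu : ∀ α, 0 ≤ u α)
    (R : I → ℝ)
    (hR : ∀ α, R α * lam α - (1 - ε α) * ∑ β, R β * Λ α β
      = σ * ε α * u α ^ 4 * lam α)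
    (V : I → ℝ) (hV : ∀ α, V α = ε α * ∑ β, R β * Λ α β) :
    ∀ α, σ * ε α * (Finset.univ.inf' Finset.univ_nonempty u) ^ 4 * lam α ≤ V α
      ∧ V α ≤ σ * ε α * (Finset.univ.sup' Finset.univ_nonempty u) ^ 4 * lam α := by
  set m := Finset.univ.inf' Finset.univ_nonempty u with hm
  set M := Finset.univ.sup' Finset.univ_nonempty u with hM
  -- upper bound on R
  have hRub : ∀ β, R β ≤ σ * M ^ 4 := by
    obtain ⟨α₀, -, hmax⟩ := Finset.exists_max_image Finset.univ R Finset.univ_nonempty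
    have hS : ∑ β, R β * Λ α₀ β ≤ R α₀ * lam α₀ := by
      calc ∑ β, R β * Λ α₀ β ≤ ∑ β, R α₀ * Λ α₀ β := by
            apply Finset.sum_le_sum
            intro i _
            exact mul_le_mul_of_nonneg_right (hmax i (Finset.mem_univ i)) (hΛ α₀ i)
        _ = R α₀ * lam α₀ := by rw [← Finset.mul_sum, hrow]
    have heq := hR α₀
    have hεα := hε α₀
    have hlamα := hlam α₀
    have h1 : ε α₀ * (R α₀ * lam α₀) ≤ σ * ε α₀ * u α₀ ^ 4 * lam α₀ := by
      nlinarith [hS, heq, hεα.1, hεα.2]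
    have h2 : R α₀ ≤ σ * u α₀ ^ 4 := by
      have := mul_pos hεα.1 hlamα
      nlinarith
    have h3 : u α₀ ≤ M := Finset.le_sup' u (Finset.mem_univ α₀)
    have h4 : u α₀ ^ 4 ≤ M ^ 4 := pow_le_pow_left₀ (hu α₀) h3 4
    intro β
    calc R β ≤ R α₀ := hmax β (Finset.mem_univ β)
      _ ≤ σ * u α₀ ^ 4 := h2
      _ ≤ σ * M ^ 4 := by nlinarith
  -- lower bound on R
  have hRlb : ∀ β, σ * m ^ 4 ≤ R β := by
    obtain ⟨α₀, -, hmin⟩ := Finset.exists_min_image Finset.univ R Finset.univ_nonempty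
    have hS : R α₀ * lam α₀ ≤ ∑ β, R β * Λ α₀ β := by
      calc R α₀ * lam α₀ = ∑ β, R α₀ * Λ α₀ β := by rw [← Finset.mul_sum, hrow]
        _ ≤ ∑ β, R β * Λ α₀ β := by
            apply Finset.sum_le_sum
            intro i _
            exact mul_le_mul_of_nonneg_right (hmin i (Finset.mem_univ i)) (hΛ α₀ i)
    have heq := hR α₀
    have hεα := hε α₀
    have hlamα := hlam α₀
    have h1 : σ * ε α₀ * u α₀ ^ 4 * lam α₀ ≤ ε α₀ * (R α₀ * lam α₀) := by
      nlinarith [hS, heq, hεα.1, hεα.2]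
    have h2 : σ * u α₀ ^ 4 ≤ R α₀ := by
      have := mul_pos hεα.1 hlamα
      nlinarith
    have h3 : m ≤ u α₀ := Finset.inf'_le u (Finset.mem_univ α₀)
    have hm0 : 0 ≤ m := by
      obtain ⟨i, -, hi⟩ := Finset.exists_mem_eq_inf' Finset.univ_nonempty u
      rw [hm, hi]; exact hu i
    have h4 : m ^ 4 ≤ u α₀ ^ 4 := pow_le_pow_left₀ hm0 h3 4
    intro β
    calc σ * m ^ 4 ≤ σ * u α₀ ^ 4 := by nlinarith
      _ ≤ R α₀ := h2
      _ ≤ R β := hmin β (Finset.mem_univ β)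
  intro α
  have hεα := (hε α).1
  have hSub : ∑ β, R β * Λ α β ≤ σ * M ^ 4 * lam α := by
    calc ∑ β, R β * Λ α β ≤ ∑ β, σ * M ^ 4 * Λ α β :=
          Finset.sum_le_sum fun i _ =>
            mul_le_mul_of_nonneg_right (hRub i) (hΛ α i)
      _ = σ * M ^ 4 * lam α := by rw [← Finset.mul_sum, hrow]
  have hSlb : σ * m ^ 4 * lam α ≤ ∑ β, R β * Λ α β := by
    calc σ * m ^ 4 * lam α = ∑ β, σ * m ^ 4 * Λ α β := by rw [← Finset.mul_sum, hrow]
      _ ≤ ∑ β, R β * Λ α β :=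
          Finset.sum_le_sum fun i _ =>
            mul_le_mul_of_nonneg_right (hRlb i) (hΛ α i)
  rw [hV α]
  constructor
  · nlinarith
  · nlinarith
end

section
/- Let I be a nonempty finite index set, let b_i : ℝ≥0 → ℝ satisfy b_i(θ₂) ≥ C(θ₂−θ₁) + b_i(θ₁) for all θ₂ ≥ θ₁ ≥ 0 with a uniform constant C > 0, and let g_i : (ℝ≥0)^I → ℝ≥0 be such that for all u and θ: max_j u_j ≤ θ implies g_i(u) ≤ h_i(θ) + B_i and θ ≤ min_j u_j implies g_i(u) ≥ h_i(θ), where h_i : ℝ≥0 → ℝ is continuous increasing and B_i ≥ 0. Fix ũ ∈ (ℝ≥0)^I. If u ∈ (ℝ≥0)^I satisfies b_i(u_i) + h_i(u_i) − b_i(ũ_i) − g_i(u) = 0 for all i, then min_j ũ_j ≤ u_i ≤ max_j ũ_j + max_i B_i/C for all i ∈ I. -/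
theorem stmt_15 {I : Type*} [Fintype I] [Nonempty I]
    (C : ℝ) (hC : 0 < C)
    (b : I → ℝ → ℝ)
    (hb : ∀ i, ∀ θ₁ θ₂ : ℝ, 0 ≤ θ₁ → θ₁ ≤ θ₂ → C * (θ₂ - θ₁) + b i θ₁ ≤ b i θ₂)
    (h : I → ℝ → ℝ)
    (hhcont : ∀ i, ContinuousOn (h i) (Set.Ici 0))
    (hhmono : ∀ i, ∀ θ₁ θ₂ : ℝ, 0 ≤ θ₁ → θ₁ ≤ θ₂ → h i θ₁ ≤ h i θ₂)
    (B : I → ℝ) (hB : ∀ i, 0 ≤ B i)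
    (g : I → (I → ℝ) → ℝ) (hgnonneg : ∀ i u, (∀ j, 0 ≤ u j) → 0 ≤ g i u)
    (hgup : ∀ i, ∀ u : I → ℝ, (∀ j, 0 ≤ u j) → ∀ θ : ℝ, 0 ≤ θ →
      Finset.univ.sup' Finset.univ_nonempty u ≤ θ → g i u ≤ h i θ + B i)
    (hglow : ∀ i, ∀ u : I → ℝ, (∀ j, 0 ≤ u j) → ∀ θ : ℝ, 0 ≤ θ →
      θ ≤ Finset.univ.inf' Finset.univ_nonempty u → h i θ ≤ g i u)
    (ut : I → ℝ) (hut : ∀ i, 0 ≤ ut i)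
    (u : I → ℝ) (hu : ∀ i, 0 ≤ u i)
    (hroot : ∀ i, b i (u i) + h i (u i) - b i (ut i) - g i u = 0) :
    ∀ i, Finset.univ.inf' Finset.univ_nonempty ut ≤ u i ∧
      u i ≤ Finset.univ.sup' Finset.univ_nonempty ut
        + Finset.univ.sup' Finset.univ_nonempty (fun j => B j) / C := by
  have hne : (Finset.univ : Finset I).Nonempty := Finset.univ_nonempty
  obtain ⟨imax, -, hmax⟩ := Finset.exists_mem_eq_sup' hne u
  obtain ⟨imin, -, hmin⟩ := Finset.exists_mem_eq_inf' hne u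
  have hsupB : 0 ≤ Finset.univ.sup' hne (fun j => B j) := by
    obtain ⟨j, -, hj⟩ := Finset.exists_mem_eq_sup' hne (fun j => B j)
    rw [hj]; exact hB j
  -- upper bound on the maximizer
  have hup : u imax ≤ Finset.univ.sup' Finset.univ_nonempty ut
      + Finset.univ.sup' Finset.univ_nonempty (fun j => B j) / C := by
    have h1 : g imax u ≤ h imax (u imax) + B imax :=
      hgup imax u hu (u imax) (hu imax) hmax.le
    have h2 : b imax (u imax) ≤ b imax (ut imax) + B imax := by
      have := hroot imax; linarith
    have hutle : ut imax ≤ Finset.univ.sup' hne ut :=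
      Finset.le_sup' ut (Finset.mem_univ imax)
    have hBle : B imax ≤ Finset.univ.sup' hne (fun j => B j) :=
      Finset.le_sup' _ (Finset.mem_univ imax)
    have hdiv : Finset.univ.sup' hne (fun j => B j) / C * C
        = Finset.univ.sup' hne (fun j => B j) := div_mul_cancel₀ _ hC.ne'
    rcases le_or_gt (u imax) (ut imax) with hle | hlt
    · have : 0 ≤ Finset.univ.sup' hne (fun j => B j) / C := div_nonneg hsupB hC.le
      linarith
    · have h3 := hb imax (ut imax) (u imax) (hut imax) hlt.le
      nlinarith
  -- lower bound on the minimizer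
  have hlow : Finset.univ.inf' Finset.univ_nonempty ut ≤ u imin := by
    have h1 : h imin (u imin) ≤ g imin u :=
      hglow imin u hu (u imin) (hu imin) hmin.ge
    have h2 : b imin (ut imin) ≤ b imin (u imin) := by
      have := hroot imin; linarith
    have hutle : Finset.univ.inf' hne ut ≤ ut imin :=
      Finset.inf'_le ut (Finset.mem_univ imin)
    rcases le_or_gt (ut imin) (u imin) with hle | hlt
    · linarith
    · have h3 := hb imin (u imin) (ut imin) (hu imin) hlt.le
      nlinarith
  intro i
  constructor
  · calc Finset.univ.inf' Finset.univ_nonempty ut ≤ u imin := hlow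
    _ ≤ u i := hmin ▸ Finset.inf'_le u (Finset.mem_univ i)
  · calc u i ≤ u imax := hmax ▸ Finset.le_sup' u (Finset.mem_univ i)
    _ ≤ _ := hup
end

section
/- Let I be a nonempty finite index set, (λ_α) positive, (Λ_{α,β}) nonnegative, (Λ_{α,ph}) nonnegative satisfying Σ_{β∈I} Λ_{α,β} + Λ_{α,ph} = λ_α, 0 < ε_α ≤ 1, σ > 0, θ_ext ≥ 0, u ∈ (ℝ≥0)^I. Let R ∈ ℝ^I solve the open-cavity radiosity system R_α λ_α − (1−ε_α) Σ_β R_β Λ_{α,β} = σ ε_α u_α⁴ λ_α + σ(1−ε_α) θ_ext⁴ Λ_{α,ph}, and define V_α := ε_α Σ_β R_β Λ_{α,β} + σ ε_α θ_ext⁴ Λ_{α,ph}. Then σ ε_α min{(min_j u_j)⁴, θ_ext⁴} λ_α ≤ V_α ≤ σ ε_α max{(max_j u_j)⁴, θ_ext⁴} λ_α for each α. -/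
theorem stmt_16 {I : Type*} [Fintype I] [Nonempty I]
    (lam : I → ℝ) (hlam : ∀ α, 0 < lam α)
    (Λ : I → I → ℝ) (hΛ : ∀ α β, 0 ≤ Λ α β)
    (Λph : I → ℝ) (hΛph : ∀ α, 0 ≤ Λph α)
    (hrow : ∀ α, (∑ β, Λ α β) + Λph α = lam α)
    (ε : I → ℝ) (hε : ∀ α, 0 < ε α ∧ ε α ≤ 1)
    (σ : ℝ) (hσ : 0 < σ)
    (θext : ℝ) (hθ : 0 ≤ θext)
    (u : I → ℝ) (hu : ∀ α, 0 ≤ u α)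
    (R : I → ℝ)
    (hR : ∀ α, R α * lam α - (1 - ε α) * ∑ β, R β * Λ α β
      = σ * ε α * u α ^ 4 * lam α + σ * (1 - ε α) * θext ^ 4 * Λph α)
    (V : I → ℝ)
    (hV : ∀ α, V α = ε α * (∑ β, R β * Λ α β) + σ * ε α * θext ^ 4 * Λph α) :
    ∀ α, σ * ε α * min ((Finset.univ.inf' Finset.univ_nonempty u) ^ 4) (θext ^ 4)
          * lam α ≤ V α
      ∧ V α ≤ σ * ε α * max ((Finset.univ.sup' Finset.univ_nonempty u) ^ 4) (θext ^ 4)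
          * lam α := by
  set um : ℝ := Finset.univ.inf' Finset.univ_nonempty u with hum
  set uM : ℝ := Finset.univ.sup' Finset.univ_nonempty u with huM
  set m : ℝ := σ * min (um ^ 4) (θext ^ 4) with hm
  set M : ℝ := σ * max (uM ^ 4) (θext ^ 4) with hM
  have hum0 : 0 ≤ um := Finset.le_inf' _ _ (fun b _ => hu b)
  have huM0 : 0 ≤ uM := le_trans (hu (Classical.arbitrary I))
    (Finset.le_sup' u (Finset.mem_univ _))
  have hm0 : 0 ≤ m := mul_nonneg hσ.le (le_min (pow_nonneg hum0 4) (pow_nonneg hθ 4))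
  have hmθ : m ≤ σ * θext ^ 4 := mul_le_mul_of_nonneg_left (min_le_right _ _) hσ.le
  have hθM : σ * θext ^ 4 ≤ M := mul_le_mul_of_nonneg_left (le_max_right _ _) hσ.le
  have hmu : ∀ β, m ≤ σ * u β ^ 4 := fun β => by
    refine mul_le_mul_of_nonneg_left ((min_le_left _ _).trans ?_) hσ.le
    exact pow_le_pow_left₀ hum0 (Finset.inf'_le u (Finset.mem_univ β)) 4
  have huMu : ∀ β, σ * u β ^ 4 ≤ M := fun β => by
    refine mul_le_mul_of_nonneg_left (le_trans ?_ (le_max_left _ _)) hσ.le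
    exact pow_le_pow_left₀ (hu β) (Finset.le_sup' u (Finset.mem_univ β)) 4
  have hΛsum : ∀ α, ∑ β, Λ α β = lam α - Λph α := fun α => by
    have := hrow α; linarith
  -- upper bound on R
  have hRM : ∀ β, R β ≤ M := by
    obtain ⟨α0, -, hmax⟩ := Finset.exists_max_image Finset.univ R Finset.univ_nonempty
    have hmax' : ∀ β, R β ≤ R α0 := fun β => hmax β (Finset.mem_univ β)
    have hS : (∑ β, R β * Λ α0 β) ≤ R α0 * (lam α0 - Λph α0) := by
      calc (∑ β, R β * Λ α0 β) ≤ ∑ β, R α0 * Λ α0 β :=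
            Finset.sum_le_sum (fun β _ => mul_le_mul_of_nonneg_right (hmax' β) (hΛ α0 β))
        _ = R α0 * (lam α0 - Λph α0) := by rw [← Finset.mul_sum, hΛsum]
    have h1 := hR α0
    have hε0 := (hε α0).1
    have hε1 := (hε α0).2
    have hlam0 := hlam α0
    have hph0 := hΛph α0
    have hu0 := huMu α0
    have hθ0 := hθM
    have hc : (ε α0 * lam α0 + (1 - ε α0) * Λph α0) * R α0
        ≤ (ε α0 * lam α0 + (1 - ε α0) * Λph α0) * M := by
      have k1 := mul_le_mul_of_nonneg_left hS (by linarith : (0:ℝ) ≤ 1 - ε α0)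
      have k2 := mul_le_mul_of_nonneg_left hu0 (by positivity : (0:ℝ) ≤ ε α0 * lam α0)
      have k3 := mul_le_mul_of_nonneg_left hθ0
        (by nlinarith : (0:ℝ) ≤ (1 - ε α0) * Λph α0)
      nlinarith [k1, k2, k3, h1]
    have hcpos : 0 < ε α0 * lam α0 + (1 - ε α0) * Λph α0 := by nlinarith
    have hc' : R α0 ≤ M := le_of_mul_le_mul_left hc hcpos
    exact fun β => (hmax' β).trans hc' 
  -- lower bound on R
  have hRm : ∀ β, m ≤ R β := by
    obtain ⟨α0, -, hmin⟩ := Finset.exists_min_image Finset.univ R Finset.univ_nonempty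
    have hmin' : ∀ β, R α0 ≤ R β := fun β => hmin β (Finset.mem_univ β)
    have hS : R α0 * (lam α0 - Λph α0) ≤ ∑ β, R β * Λ α0 β := by
      calc R α0 * (lam α0 - Λph α0) = ∑ β, R α0 * Λ α0 β := by rw [← Finset.mul_sum, hΛsum]
        _ ≤ ∑ β, R β * Λ α0 β :=
            Finset.sum_le_sum (fun β _ => mul_le_mul_of_nonneg_right (hmin' β) (hΛ α0 β))
    have h1 := hR α0
    have hε0 := (hε α0).1
    have hε1 := (hε α0).2
    have hlam0 := hlam α0
    have hph0 := hΛph α0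
    have hu0 := hmu α0
    have hθ0 := hmθ
    have hc : (ε α0 * lam α0 + (1 - ε α0) * Λph α0) * m
        ≤ (ε α0 * lam α0 + (1 - ε α0) * Λph α0) * R α0 := by
      have k1 := mul_le_mul_of_nonneg_left hS (by linarith : (0:ℝ) ≤ 1 - ε α0)
      have k2 := mul_le_mul_of_nonneg_left hu0 (by positivity : (0:ℝ) ≤ ε α0 * lam α0)
      have k3 := mul_le_mul_of_nonneg_left hθ0
        (by nlinarith : (0:ℝ) ≤ (1 - ε α0) * Λph α0)
      nlinarith [k1, k2, k3, h1]
    have hcpos : 0 < ε α0 * lam α0 + (1 - ε α0) * Λph α0 := by nlinarith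
    have hc' : m ≤ R α0 := le_of_mul_le_mul_left hc hcpos
    exact fun β => hc'.trans (hmin' β)
  intro α
  have hε0 := (hε α).1
  have hph := hΛph α
  have hlamph : 0 ≤ lam α - Λph α := by
    have := hΛsum α
    have : 0 ≤ ∑ β, Λ α β := Finset.sum_nonneg (fun β _ => hΛ α β)
    linarith [hΛsum α ▸ this]
  have hSM : (∑ β, R β * Λ α β) ≤ M * (lam α - Λph α) := by
    calc (∑ β, R β * Λ α β) ≤ ∑ β, M * Λ α β :=
          Finset.sum_le_sum (fun β _ => mul_le_mul_of_nonneg_right (hRM β) (hΛ α β))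
      _ = M * (lam α - Λph α) := by rw [← Finset.mul_sum, hΛsum]
  have hSm : m * (lam α - Λph α) ≤ ∑ β, R β * Λ α β := by
    calc m * (lam α - Λph α) = ∑ β, m * Λ α β := by rw [← Finset.mul_sum, hΛsum]
      _ ≤ ∑ β, R β * Λ α β :=
          Finset.sum_le_sum (fun β _ => mul_le_mul_of_nonneg_right (hRm β) (hΛ α β))
  rw [hV α]
  constructor
  · have hrw : σ * ε α * min (um ^ 4) (θext ^ 4) * lam α
        = ε α * (m * (lam α - Λph α)) + ε α * ((σ * θext ^ 4) * Λph α)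
          - ε α * ((σ * θext ^ 4 - m) * Λph α) := by rw [hm]; ring
    rw [hrw]
    have k1 := mul_le_mul_of_nonneg_left hSm hε0.le
    have k2 : 0 ≤ ε α * ((σ * θext ^ 4 - m) * Λph α) := by
      have := mul_nonneg (by linarith : (0:ℝ) ≤ σ * θext ^ 4 - m) hph
      positivity
    nlinarith [k1, k2]
  · have hrw : σ * ε α * max (uM ^ 4) (θext ^ 4) * lam α
        = ε α * (M * (lam α - Λph α)) + ε α * ((σ * θext ^ 4) * Λph α)
          + ε α * ((M - σ * θext ^ 4) * Λph α) := by rw [hM]; ring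
    rw [hrw]
    have k1 := mul_le_mul_of_nonneg_left hSM hε0.le
    have k2 : 0 ≤ ε α * ((M - σ * θext ^ 4) * Λph α) := by
      have := mul_nonneg (by linarith : (0:ℝ) ≤ M - σ * θext ^ 4) hph
      positivity
    nlinarith [k1, k2]
end

section
/- Let I be a nonempty finite index set, (λ_α) positive, (Λ_{α,β})_{α,β∈I} and (Λ_{α,ph})_{α∈I} nonnegative with Σ_β Λ_{α,β} + Λ_{α,ph} = λ_α, r > 0, σ > 0, θ_ext ≥ 0, and ε : ℝ → (0,1] L-Lipschitz on [0,r] with ε ≥ ε_min > 0 on [0,r]. For u ∈ [0,r]^I let R(u) be the unique solution of the open-cavity radiosity system R_α(u) λ_α − (1−ε(u_α)) Σ_β R_β(u) Λ_{α,β} = σ ε(u_α) u_α⁴ λ_α + σ(1−ε(u_α)) θ_ext⁴ Λ_{α,ph}. Then u ↦ R(u) is Lipschitz on [0,r]^I with respect to the max-norm with constant σ ε_min⁻¹ (4r³ + L(r⁴ + max{r⁴, θ_ext⁴})). -/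
lemma radiosity_apriori {I : Type*} [Fintype I] [Nonempty I]
    (r σ θext : ℝ) (hσ : 0 < σ)
    (ε : ℝ → ℝ)
    (hrange : ∀ θ ∈ Set.Icc (0:ℝ) r, 0 < ε θ ∧ ε θ ≤ 1)
    (lam : I → ℝ) (hlam : ∀ α, 0 < lam α)
    (Λ : I → I → ℝ) (hΛ : ∀ α β, 0 ≤ Λ α β)
    (Λph : I → ℝ) (hΛph : ∀ α, 0 ≤ Λph α)
    (hrow : ∀ α, (∑ β, Λ α β) + Λph α = lam α)
    (w : I → ℝ) (hw : ∀ i, w i ∈ Set.Icc (0:ℝ) r)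
    (Rw : I → ℝ)
    (hRw : ∀ α, Rw α * lam α - (1 - ε (w α)) * ∑ β, Rw β * Λ α β
        = σ * ε (w α) * w α ^ 4 * lam α
          + σ * (1 - ε (w α)) * θext ^ 4 * Λph α) :
    ∀ β, |Rw β| ≤ σ * max (r ^ 4) (θext ^ 4) := by
  set M := max (r ^ 4) (θext ^ 4) with hM
  obtain ⟨β₀, -, hβ₀⟩ := Finset.exists_mem_eq_sup' (Finset.univ_nonempty (α := I))
    (fun β => |Rw β|)
  set s := |Rw β₀| with hs
  have hsge : ∀ β, |Rw β| ≤ s := fun β => hβ₀ ▸ Finset.le_sup' (fun β => |Rw β|) (Finset.mem_univ β)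
  have hs0 : 0 ≤ s := abs_nonneg _
  have hε := hrange (w β₀) (hw β₀)
  have hw4 : w β₀ ^ 4 ≤ M := by
    refine le_trans ?_ (le_max_left _ _)
    exact pow_le_pow_left₀ (hw β₀).1 (hw β₀).2 4
  have hθ4 : θext ^ 4 ≤ M := le_max_right _ _
  have hM0 : 0 ≤ M := le_trans (by positivity) hw4
  have hsumΛ : ∑ β, Λ β₀ β = lam β₀ - Λph β₀ := by linarith [hrow β₀]
  -- bound on sum of |Rw|
  have habsum : |∑ β, Rw β * Λ β₀ β| ≤ s * (lam β₀ - Λph β₀) := by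
    calc |∑ β, Rw β * Λ β₀ β| ≤ ∑ β, |Rw β * Λ β₀ β| := Finset.abs_sum_le_sum_abs _ _
      _ ≤ ∑ β, s * Λ β₀ β := by
          refine Finset.sum_le_sum fun β _ => ?_
          rw [abs_mul, abs_of_nonneg (hΛ β₀ β)]
          exact mul_le_mul_of_nonneg_right (hsge β) (hΛ β₀ β)
      _ = s * (lam β₀ - Λph β₀) := by rw [← Finset.mul_sum, hsumΛ]
  have key := hRw β₀
  have hlhs : s * (ε (w β₀) * lam β₀ + (1 - ε (w β₀)) * Λph β₀)
      ≤ |Rw β₀ * lam β₀ - (1 - ε (w β₀)) * ∑ β, Rw β * Λ β₀ β| := by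
    have h1 : |Rw β₀ * lam β₀| - |(1 - ε (w β₀)) * ∑ β, Rw β * Λ β₀ β|
        ≤ |Rw β₀ * lam β₀ - (1 - ε (w β₀)) * ∑ β, Rw β * Λ β₀ β| :=
      abs_sub_abs_le_abs_sub _ _
    have h2 : |Rw β₀ * lam β₀| = s * lam β₀ := by
      rw [abs_mul, abs_of_pos (hlam β₀)]
    have h3 : |(1 - ε (w β₀)) * ∑ β, Rw β * Λ β₀ β| ≤ (1 - ε (w β₀)) * (s * (lam β₀ - Λph β₀)) := by
      rw [abs_mul, abs_of_nonneg (by linarith [hε.2] : (0:ℝ) ≤ 1 - ε (w β₀))]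
      exact mul_le_mul_of_nonneg_left habsum (by linarith [hε.2])
    nlinarith
  have hrhs : |σ * ε (w β₀) * w β₀ ^ 4 * lam β₀ + σ * (1 - ε (w β₀)) * θext ^ 4 * Λph β₀|
      ≤ σ * M * (ε (w β₀) * lam β₀ + (1 - ε (w β₀)) * Λph β₀) := by
    have h1 : (0:ℝ) ≤ σ * ε (w β₀) * w β₀ ^ 4 * lam β₀ := by
      have := hε.1; have := hlam β₀; have : (0:ℝ) ≤ w β₀ ^ 4 := by positivity
      positivity
    have h2 : (0:ℝ) ≤ σ * (1 - ε (w β₀)) * θext ^ 4 * Λph β₀ := by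
      exact mul_nonneg (mul_nonneg (mul_nonneg hσ.le (by linarith [hε.2])) (by positivity))
        (hΛph β₀)
    rw [abs_of_nonneg (by linarith)]
    have := hε.1; have := hε.2; have := hlam β₀; have := hΛph β₀
    nlinarith [mul_le_mul_of_nonneg_left hw4 (le_of_lt (mul_pos hσ hε.1)),
      mul_le_mul_of_nonneg_left hθ4 (mul_nonneg hσ.le (by linarith : (0:ℝ) ≤ 1 - ε (w β₀)))]
  have hc : 0 < ε (w β₀) * lam β₀ + (1 - ε (w β₀)) * Λph β₀ := by
    have := mul_pos hε.1 (hlam β₀)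
    nlinarith [mul_nonneg (by linarith [hε.2] : (0:ℝ) ≤ 1 - ε (w β₀)) (hΛph β₀)]
  have hsM : s ≤ σ * M := by
    have := hlhs.trans (key ▸ hrhs)
    exact le_of_mul_le_mul_right (by nlinarith) hc
  exact fun β => (hsge β).trans hsM

set_option maxHeartbeats 1000000 in
theorem stmt_19 {I : Type*} [Fintype I] [Nonempty I]
    (r L εmin σ θext : ℝ) (hr : 0 < r) (hL : 0 ≤ L) (hεmin : 0 < εmin)
    (hσ : 0 < σ) (hθ : 0 ≤ θext)
    (ε : ℝ → ℝ)
    (hrange : ∀ θ ∈ Set.Icc (0:ℝ) r, 0 < ε θ ∧ ε θ ≤ 1)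
    (hεlow : ∀ θ ∈ Set.Icc (0:ℝ) r, εmin ≤ ε θ)
    (hlip : ∀ θ₁ ∈ Set.Icc (0:ℝ) r, ∀ θ₂ ∈ Set.Icc (0:ℝ) r,
      |ε θ₁ - ε θ₂| ≤ L * |θ₁ - θ₂|)
    (lam : I → ℝ) (hlam : ∀ α, 0 < lam α)
    (Λ : I → I → ℝ) (hΛ : ∀ α β, 0 ≤ Λ α β)
    (Λph : I → ℝ) (hΛph : ∀ α, 0 ≤ Λph α)
    (hrow : ∀ α, (∑ β, Λ α β) + Λph α = lam α)
    (R : (I → ℝ) → (I → ℝ))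
    (hR : ∀ u : I → ℝ, (∀ i, u i ∈ Set.Icc (0:ℝ) r) → ∀ α,
      R u α * lam α - (1 - ε (u α)) * ∑ β, R u β * Λ α β
        = σ * ε (u α) * u α ^ 4 * lam α
          + σ * (1 - ε (u α)) * θext ^ 4 * Λph α) :
    ∀ u v : I → ℝ, (∀ i, u i ∈ Set.Icc (0:ℝ) r) → (∀ i, v i ∈ Set.Icc (0:ℝ) r) →
      ∀ α, |R u α - R v α|
        ≤ σ * εmin⁻¹ * (4 * r ^ 3 + L * (r ^ 4 + max (r ^ 4) (θext ^ 4)))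
          * Finset.univ.sup' Finset.univ_nonempty (fun i => |u i - v i|) := by
  intro u v hu hv
  set M := max (r ^ 4) (θext ^ 4) with hMdef
  set C := 4 * r ^ 3 + L * (r ^ 4 + M) with hCdef
  have hRvB : ∀ β, |R v β| ≤ σ * M :=
    radiosity_apriori r σ θext hσ ε hrange lam hlam Λ hΛ Λph hΛph hrow v hv (R v) (hR v hv)
  set m := Finset.univ.sup' Finset.univ_nonempty (fun i => |u i - v i|) with hmdef
  have hmi : ∀ i, |u i - v i| ≤ m :=
    fun i => Finset.le_sup' (fun i => |u i - v i|) (Finset.mem_univ i)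
  have hm0 : 0 ≤ m := (abs_nonneg _).trans (hmi (Classical.arbitrary I))
  clear_value m
  have hM0 : (0:ℝ) ≤ M := le_trans (by positivity) (le_max_left _ _)
  have hC0 : (0:ℝ) ≤ C := by
    rw [hCdef]
    have : (0:ℝ) ≤ r ^ 4 + M := by positivity
    nlinarith [pow_pos hr 3]
  obtain ⟨α₀, -, hα₀⟩ := Finset.exists_mem_eq_sup' (Finset.univ_nonempty (α := I))
    (fun i => |R u i - R v i|)
  set S := |R u α₀ - R v α₀| with hSdef
  have hSge : ∀ β, |R u β - R v β| ≤ S :=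
    fun β => hα₀ ▸ Finset.le_sup' (fun i => |R u i - R v i|) (Finset.mem_univ β)
  have hS0 : 0 ≤ S := abs_nonneg _
  clear_value S
  -- the key suffices
  suffices hfin : S ≤ σ * εmin⁻¹ * C * m by
    intro α; exact (hSge α).trans hfin
  have hεu := hrange (u α₀) (hu α₀)
  have hεv := hrange (v α₀) (hv α₀)
  have hεl := hεlow (u α₀) (hu α₀)
  have h1eu : (0:ℝ) ≤ 1 - ε (u α₀) := by linarith [hεu.2]
  -- subtracted system
  have hsum : ∑ β, (R u β - R v β) * Λ α₀ β
      = (∑ β, R u β * Λ α₀ β) - ∑ β, R v β * Λ α₀ β := by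
    rw [← Finset.sum_sub_distrib]
    exact Finset.sum_congr rfl fun β _ => by ring
  have hequ := hR u hu α₀
  have heqv := hR v hv α₀
  have key : (R u α₀ - R v α₀) * lam α₀ - (1 - ε (u α₀)) * ∑ β, (R u β - R v β) * Λ α₀ β
      = σ * ε (u α₀) * (u α₀ ^ 4 - v α₀ ^ 4) * lam α₀
        + σ * (ε (u α₀) - ε (v α₀)) * v α₀ ^ 4 * lam α₀
        + σ * (ε (v α₀) - ε (u α₀)) * θext ^ 4 * Λph α₀
        + (ε (v α₀) - ε (u α₀)) * ∑ β, R v β * Λ α₀ β := by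
    rw [hsum]; linear_combination hequ - heqv
  have hsumΛ : ∑ β, Λ α₀ β = lam α₀ - Λph α₀ := by linarith [hrow α₀]
  have hΛsum0 : (0:ℝ) ≤ lam α₀ - Λph α₀ := by
    rw [← hsumΛ]; exact Finset.sum_nonneg fun β _ => hΛ α₀ β
  -- lower bound for |LHS|
  have habsD : |∑ β, (R u β - R v β) * Λ α₀ β| ≤ S * (lam α₀ - Λph α₀) := by
    calc |∑ β, (R u β - R v β) * Λ α₀ β| ≤ ∑ β, |(R u β - R v β) * Λ α₀ β| :=
          Finset.abs_sum_le_sum_abs _ _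
      _ ≤ ∑ β, S * Λ α₀ β := by
          refine Finset.sum_le_sum fun β _ => ?_
          rw [abs_mul, abs_of_nonneg (hΛ α₀ β)]
          exact mul_le_mul_of_nonneg_right (hSge β) (hΛ α₀ β)
      _ = S * (lam α₀ - Λph α₀) := by rw [← Finset.mul_sum, hsumΛ]
  have hlhs : εmin * lam α₀ * S
      ≤ |(R u α₀ - R v α₀) * lam α₀ - (1 - ε (u α₀)) * ∑ β, (R u β - R v β) * Λ α₀ β| := by
    have h1 := abs_sub_abs_le_abs_sub ((R u α₀ - R v α₀) * lam α₀)
      ((1 - ε (u α₀)) * ∑ β, (R u β - R v β) * Λ α₀ β)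
    have h2 : |(R u α₀ - R v α₀) * lam α₀| = S * lam α₀ := by
      rw [hSdef, abs_mul, abs_of_pos (hlam α₀)]
    have h3 : |(1 - ε (u α₀)) * ∑ β, (R u β - R v β) * Λ α₀ β|
        ≤ (1 - ε (u α₀)) * (S * (lam α₀ - Λph α₀)) := by
      rw [abs_mul, abs_of_nonneg h1eu]
      exact mul_le_mul_of_nonneg_left habsD h1eu
    have h4 : εmin * lam α₀ * S ≤ ε (u α₀) * lam α₀ * S := by
      nlinarith [mul_nonneg (mul_nonneg (sub_nonneg.mpr hεl) (hlam α₀).le) hS0]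
    have h5 : ε (u α₀) * lam α₀ * S ≤ S * lam α₀ - (1 - ε (u α₀)) * (S * (lam α₀ - Λph α₀)) := by
      nlinarith [mul_nonneg (mul_nonneg h1eu hS0) (hΛph α₀)]
    linarith
  -- upper bound for |RHS|
  have hlipm : |ε (u α₀) - ε (v α₀)| ≤ L * m := by
    calc |ε (u α₀) - ε (v α₀)| ≤ L * |u α₀ - v α₀| := hlip _ (hu α₀) _ (hv α₀)
      _ ≤ L * m := mul_le_mul_of_nonneg_left (hmi α₀) hL
  have h4r : |u α₀ ^ 4 - v α₀ ^ 4| ≤ 4 * r ^ 3 * m := by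
    have hfac : u α₀ ^ 4 - v α₀ ^ 4
        = (u α₀ - v α₀) * (u α₀ ^ 3 + u α₀ ^ 2 * v α₀ + u α₀ * v α₀ ^ 2 + v α₀ ^ 3) := by ring
    rw [hfac, abs_mul]
    have hub := (hu α₀).2; have hlb := (hu α₀).1
    have hvb := (hv α₀).2; have hvl := (hv α₀).1
    have hbound : |u α₀ ^ 3 + u α₀ ^ 2 * v α₀ + u α₀ * v α₀ ^ 2 + v α₀ ^ 3| ≤ 4 * r ^ 3 := by
      rw [abs_of_nonneg (add_nonneg (add_nonneg (add_nonneg (pow_nonneg hlb 3)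
        (mul_nonneg (pow_nonneg hlb 2) hvl)) (mul_nonneg hlb (pow_nonneg hvl 2)))
        (pow_nonneg hvl 3))]
      have a1 : u α₀ ^ 3 ≤ r ^ 3 := pow_le_pow_left₀ hlb hub 3
      have a2 : v α₀ ^ 3 ≤ r ^ 3 := pow_le_pow_left₀ hvl hvb 3
      have a3 : u α₀ ^ 2 * v α₀ ≤ r ^ 3 := by
        calc u α₀ ^ 2 * v α₀ ≤ r ^ 2 * r :=
              mul_le_mul (pow_le_pow_left₀ hlb hub 2) hvb hvl (by positivity)
          _ = r ^ 3 := by ring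
      have a4 : u α₀ * v α₀ ^ 2 ≤ r ^ 3 := by
        calc u α₀ * v α₀ ^ 2 ≤ r * r ^ 2 :=
              mul_le_mul hub (pow_le_pow_left₀ hvl hvb 2) (by positivity) hr.le
          _ = r ^ 3 := by ring
      linarith
    calc |u α₀ - v α₀| * |u α₀ ^ 3 + u α₀ ^ 2 * v α₀ + u α₀ * v α₀ ^ 2 + v α₀ ^ 3|
        ≤ m * (4 * r ^ 3) :=
          mul_le_mul (hmi α₀) hbound (abs_nonneg _) hm0
      _ = 4 * r ^ 3 * m := by ring
  have habsRv : |∑ β, R v β * Λ α₀ β| ≤ σ * M * (lam α₀ - Λph α₀) := by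
    calc |∑ β, R v β * Λ α₀ β| ≤ ∑ β, |R v β * Λ α₀ β| := Finset.abs_sum_le_sum_abs _ _
      _ ≤ ∑ β, σ * M * Λ α₀ β := by
          refine Finset.sum_le_sum fun β _ => ?_
          rw [abs_mul, abs_of_nonneg (hΛ α₀ β)]
          exact mul_le_mul_of_nonneg_right (hRvB β) (hΛ α₀ β)
      _ = σ * M * (lam α₀ - Λph α₀) := by rw [← Finset.mul_sum, hsumΛ]
  have hv4 : v α₀ ^ 4 ≤ r ^ 4 := pow_le_pow_left₀ (hv α₀).1 (hv α₀).2 4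
  have hθ4 : θext ^ 4 ≤ M := le_max_right _ _
  have hrhs : |σ * ε (u α₀) * (u α₀ ^ 4 - v α₀ ^ 4) * lam α₀
        + σ * (ε (u α₀) - ε (v α₀)) * v α₀ ^ 4 * lam α₀
        + σ * (ε (v α₀) - ε (u α₀)) * θext ^ 4 * Λph α₀
        + (ε (v α₀) - ε (u α₀)) * ∑ β, R v β * Λ α₀ β|
      ≤ σ * lam α₀ * C * m := by
    have t1 : |σ * ε (u α₀) * (u α₀ ^ 4 - v α₀ ^ 4) * lam α₀|
        ≤ σ * lam α₀ * (4 * r ^ 3) * m := by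
      rw [abs_mul, abs_mul, abs_mul, abs_of_pos hσ, abs_of_pos hεu.1, abs_of_pos (hlam α₀)]
      have hεx : ε (u α₀) * |u α₀ ^ 4 - v α₀ ^ 4| ≤ 4 * r ^ 3 * m := by
        calc ε (u α₀) * |u α₀ ^ 4 - v α₀ ^ 4| ≤ 1 * (4 * r ^ 3 * m) :=
              mul_le_mul hεu.2 h4r (abs_nonneg _) one_pos.le
          _ = 4 * r ^ 3 * m := one_mul _
      calc σ * ε (u α₀) * |u α₀ ^ 4 - v α₀ ^ 4| * lam α₀
          = (σ * lam α₀) * (ε (u α₀) * |u α₀ ^ 4 - v α₀ ^ 4|) := by ring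
        _ ≤ (σ * lam α₀) * (4 * r ^ 3 * m) :=
            mul_le_mul_of_nonneg_left hεx (mul_nonneg hσ.le (hlam α₀).le)
        _ = σ * lam α₀ * (4 * r ^ 3) * m := by ring
    have t2 : |σ * (ε (u α₀) - ε (v α₀)) * v α₀ ^ 4 * lam α₀|
        ≤ σ * lam α₀ * (L * r ^ 4) * m := by
      rw [abs_mul, abs_mul, abs_mul, abs_of_pos hσ, abs_of_pos (hlam α₀)]
      have hv40 : (0:ℝ) ≤ v α₀ ^ 4 := by positivity
      have habs4 : |v α₀ ^ 4| = v α₀ ^ 4 := abs_of_nonneg hv40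
      rw [habs4]
      have hx : |ε (u α₀) - ε (v α₀)| * v α₀ ^ 4 ≤ L * m * r ^ 4 :=
        mul_le_mul hlipm hv4 hv40 (mul_nonneg hL hm0)
      calc σ * |ε (u α₀) - ε (v α₀)| * v α₀ ^ 4 * lam α₀
          = (σ * lam α₀) * (|ε (u α₀) - ε (v α₀)| * v α₀ ^ 4) := by ring
        _ ≤ (σ * lam α₀) * (L * m * r ^ 4) :=
            mul_le_mul_of_nonneg_left hx (mul_nonneg hσ.le (hlam α₀).le)
        _ = σ * lam α₀ * (L * r ^ 4) * m := by ring
    have t3 : |σ * (ε (v α₀) - ε (u α₀)) * θext ^ 4 * Λph α₀|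
        ≤ σ * Λph α₀ * (L * M) * m := by
      rw [abs_mul, abs_mul, abs_mul, abs_of_pos hσ, abs_of_nonneg (hΛph α₀),
        abs_of_nonneg (by positivity : (0:ℝ) ≤ θext ^ 4), abs_sub_comm]
      have hx : |ε (u α₀) - ε (v α₀)| * θext ^ 4 ≤ L * m * M :=
        mul_le_mul hlipm hθ4 (by positivity) (mul_nonneg hL hm0)
      calc σ * |ε (u α₀) - ε (v α₀)| * θext ^ 4 * Λph α₀
          = (σ * Λph α₀) * (|ε (u α₀) - ε (v α₀)| * θext ^ 4) := by ring
        _ ≤ (σ * Λph α₀) * (L * m * M) :=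
            mul_le_mul_of_nonneg_left hx (mul_nonneg hσ.le (hΛph α₀))
        _ = σ * Λph α₀ * (L * M) * m := by ring
    have t4 : |(ε (v α₀) - ε (u α₀)) * ∑ β, R v β * Λ α₀ β|
        ≤ (lam α₀ - Λph α₀) * (σ * (L * M)) * m := by
      rw [abs_mul, abs_sub_comm]
      calc |ε (u α₀) - ε (v α₀)| * |∑ β, R v β * Λ α₀ β|
          ≤ L * m * (σ * M * (lam α₀ - Λph α₀)) :=
            mul_le_mul hlipm habsRv (abs_nonneg _) (mul_nonneg hL hm0)
        _ = (lam α₀ - Λph α₀) * (σ * (L * M)) * m := by ring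
    have hsplit := (abs_add_le _ _).trans (add_le_add ((abs_add_le _ _).trans
      (add_le_add ((abs_add_le (σ * ε (u α₀) * (u α₀ ^ 4 - v α₀ ^ 4) * lam α₀)
        (σ * (ε (u α₀) - ε (v α₀)) * v α₀ ^ 4 * lam α₀)).trans (add_le_add t1 t2)) t3)) t4)
    calc |σ * ε (u α₀) * (u α₀ ^ 4 - v α₀ ^ 4) * lam α₀
          + σ * (ε (u α₀) - ε (v α₀)) * v α₀ ^ 4 * lam α₀
          + σ * (ε (v α₀) - ε (u α₀)) * θext ^ 4 * Λph α₀
          + (ε (v α₀) - ε (u α₀)) * ∑ β, R v β * Λ α₀ β|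
        ≤ σ * lam α₀ * (4 * r ^ 3) * m + σ * lam α₀ * (L * r ^ 4) * m
            + σ * Λph α₀ * (L * M) * m + (lam α₀ - Λph α₀) * (σ * (L * M)) * m := hsplit
      _ = σ * lam α₀ * C * m := by rw [hCdef]; ring
  -- combine
  have hmain : εmin * lam α₀ * S ≤ σ * lam α₀ * C * m := hlhs.trans (key ▸ hrhs)
  have hεS : εmin * S ≤ σ * C * m := by
    have hl := hlam α₀
    nlinarith
  rw [show σ * εmin⁻¹ * C * m = (σ * C * m) / εmin by rw [div_eq_mul_inv]; ring,
    le_div_iff₀ hεmin]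
  linarith
end
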